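/- arXiv:1701.04589 — 4 statements merged into one kernel-verified Lean document; each statement's English description precedes it below -/
import Mathlib

section
/- Let ν > 0 and c > 0 be real numbers. The function N(t) = N₀ Σ_{k=0}^∞ (-1)^k (ct)^{νk} / Γ(νk+1) = N₀ · E_{ν,1}(−(ct)^ν) satisfies the fractional kinetic equation N(t) − N₀ = −c^ν · (₀D_t^{−ν} N)(t) for all t > 0, where (₀D_t^{−ν} f)(t) = (1/Γ(ν)) ∫₀^t (t−s)^{ν−1} f(s) ds. -/
open Real MeasureTheory intervalIntegral

/-- Real Beta integral. -/
lemma hm_beta (ν μ t : ℝ) (hν : 0 < ν) (hμ : 0 ≤ μ) (ht : 0 < t) :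
    ∫ s in (0:ℝ)..t, s ^ μ * (t - s) ^ (ν - 1) =
      Real.Gamma (μ + 1) * Real.Gamma ν / Real.Gamma (μ + 1 + ν) * t ^ (μ + ν) := by
  have key := Complex.betaIntegral_scaled ((μ : ℂ) + 1) (ν : ℂ) ht
  have hre1 : 0 < ((μ : ℂ) + 1).re := by simp; positivity
  have hre2 : 0 < ((ν : ℂ)).re := by simpa using hν
  have hβ := Complex.Gamma_mul_Gamma_eq_betaIntegral hre1 hre2
  have hΓne : Complex.Gamma ((μ : ℂ) + 1 + ν) ≠ 0 := by
    apply Complex.Gamma_ne_zero_of_re_pos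
    simp; positivity
  have hβval : Complex.betaIntegral ((μ : ℂ) + 1) (ν : ℂ) =
      Complex.Gamma ((μ : ℂ) + 1) * Complex.Gamma (ν : ℂ) / Complex.Gamma ((μ : ℂ) + 1 + ν) := by
    rw [hβ, mul_div_cancel_left₀ _ hΓne]
  -- convert LHS of key into real integral
  have hLHS : (∫ x in (0:ℝ)..t, (x : ℂ) ^ ((μ : ℂ) + 1 - 1) * ((t : ℂ) - x) ^ ((ν : ℂ) - 1))
      = ((∫ s in (0:ℝ)..t, s ^ μ * (t - s) ^ (ν - 1) : ℝ) : ℂ) := by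
    rw [← intervalIntegral.integral_ofReal]
    apply intervalIntegral.integral_congr
    intro x hx
    rw [Set.uIcc_of_le ht.le] at hx
    obtain ⟨hx0, hxt⟩ := hx
    have h1 : ((μ : ℂ) + 1 - 1) = ((μ : ℝ) : ℂ) := by ring
    have h2 : ((ν : ℂ) - 1) = (((ν - 1 : ℝ)) : ℂ) := by push_cast; ring
    simp only [h1, h2]
    rw [← Complex.ofReal_cpow hx0, ← Complex.ofReal_sub,
      ← Complex.ofReal_cpow (by linarith : (0:ℝ) ≤ t - x), ← Complex.ofReal_mul]
  rw [hLHS, hβval] at key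
  have hRHS : (t : ℂ) ^ ((μ : ℂ) + 1 + ν - 1) *
      (Complex.Gamma ((μ : ℂ) + 1) * Complex.Gamma (ν : ℂ) / Complex.Gamma ((μ : ℂ) + 1 + ν))
      = ((Real.Gamma (μ + 1) * Real.Gamma ν / Real.Gamma (μ + 1 + ν) * t ^ (μ + ν) : ℝ) : ℂ) := by
    have h3 : ((μ : ℂ) + 1 + ν - 1) = (((μ + ν : ℝ)) : ℂ) := by push_cast; ring
    have h4 : ((μ : ℂ) + 1) = (((μ + 1 : ℝ)) : ℂ) := by push_cast; ring
    have h5 : ((μ : ℂ) + 1 + ν) = (((μ + 1 + ν : ℝ)) : ℂ) := by push_cast; ring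
    rw [h3, h5, h4, ← Complex.ofReal_cpow ht.le, Complex.Gamma_ofReal, Complex.Gamma_ofReal,
      Complex.Gamma_ofReal]
    push_cast
    ring
  rw [hRHS] at key
  exact_mod_cast key

open Real MeasureTheory intervalIntegral

lemma hm_gamma_lb {s M : ℝ} (hs : 1 ≤ s) (hM : 1 ≤ M) :
    Real.exp (-(2 * M)) * M ^ s ≤ Real.Gamma s := by
  have hs0 : 0 < s := by linarith
  have hM0 : 0 < M := by linarith
  rw [Real.Gamma_eq_integral hs0]
  have hint : IntegrableOn (fun x : ℝ => Real.exp (-x) * x ^ (s - 1)) (Set.Ioi 0) :=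
    Real.GammaIntegral_convergent hs0
  have hsub : Set.Ioc M (2 * M) ⊆ Set.Ioi (0:ℝ) := fun x hx => lt_trans hM0 hx.1
  have step1 : (∫ x in Set.Ioc M (2*M), Real.exp (-x) * x ^ (s - 1))
      ≤ ∫ x in Set.Ioi (0:ℝ), Real.exp (-x) * x ^ (s - 1) := by
    apply setIntegral_mono_set hint
    · refine (ae_restrict_iff' measurableSet_Ioi).2 (Filter.Eventually.of_forall ?_)
      intro x hx
      have hx0 : (0:ℝ) < x := hx
      positivity
    · exact Filter.Eventually.of_forall hsub
  refine le_trans ?_ step1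
  have hmeas : (volume (Set.Ioc M (2*M))).toReal = M := by
    rw [Real.volume_Ioc]
    rw [ENNReal.toReal_ofReal (by linarith)]
    ring
  have step2 : (Real.exp (-(2*M)) * M ^ (s-1)) * (volume (Set.Ioc M (2*M))).toReal
      ≤ ∫ x in Set.Ioc M (2*M), Real.exp (-x) * x ^ (s - 1) := by
    apply setIntegral_ge_of_const_le_real measurableSet_Ioc (by rw [Real.volume_Ioc]; exact ENNReal.ofReal_ne_top)
    · intro x hx
      have h1 : Real.exp (-(2*M)) ≤ Real.exp (-x) := Real.exp_le_exp.2 (by linarith [hx.2])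
      have h2 : M ^ (s-1) ≤ x ^ (s-1) :=
        Real.rpow_le_rpow hM0.le hx.1.le (by linarith)
      exact mul_le_mul h1 h2 (Real.rpow_nonneg hM0.le _) (Real.exp_pos _).le
    · exact hint.mono_set hsub
  rw [hmeas] at step2
  refine le_trans (le_of_eq ?_) step2
  have h := Real.rpow_add_one hM0.ne' (s-1)
  rw [sub_add_cancel] at h
  rw [h]; ring

lemma hm_summable {ν β : ℝ} (hν : 0 < ν) (hβ : 1 ≤ β) {y : ℝ} (hy : 0 ≤ y) :
    Summable (fun k : ℕ => y ^ k / Real.Gamma (ν * k + β)) := by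
  set M : ℝ := max 1 ((2 * y + 1) ^ ν⁻¹) with hMdef
  have hM1 : 1 ≤ M := le_max_left _ _
  have hM0 : (0:ℝ) < M := by linarith
  have hMν : 2 * y + 1 ≤ M ^ ν := by
    calc 2 * y + 1 = ((2 * y + 1) ^ ν⁻¹) ^ ν := (Real.rpow_inv_rpow (by linarith) hν.ne').symm
    _ ≤ M ^ ν := Real.rpow_le_rpow (Real.rpow_nonneg (by linarith) _) (le_max_right _ _) hν.le
  have hMν1 : (1:ℝ) ≤ M ^ ν := by nlinarith
  have hr : y / M ^ ν < 1 := by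
    rw [div_lt_one (by linarith)]
    linarith
  have hr0 : 0 ≤ y / M ^ ν := div_nonneg hy (by linarith)
  apply Summable.of_nonneg_of_le
    (g := fun k : ℕ => y ^ k / Real.Gamma (ν * k + β))
    (f := fun k : ℕ => Real.exp (2 * M) * (y / M ^ ν) ^ k)
  · intro k
    have := Real.Gamma_pos_of_pos (s := ν * ↑k + β) (by positivity)
    positivity
  · intro k
    have hG : Real.exp (-(2*M)) * (M ^ ν) ^ k ≤ Real.Gamma (ν * k + β) := by
      have h1 : Real.exp (-(2*M)) * M ^ (ν * k + β) ≤ Real.Gamma (ν * k + β) :=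
        hm_gamma_lb (by nlinarith [mul_nonneg hν.le (Nat.cast_nonneg k)]) hM1
      refine le_trans ?_ h1
      apply mul_le_mul_of_nonneg_left _ (Real.exp_pos _).le
      rw [Real.rpow_add hM0, Real.rpow_mul_natCast hM0.le]
      have : (1:ℝ) ≤ M ^ β := Real.one_le_rpow hM1 (by linarith)
      nlinarith [pow_nonneg (by linarith : (0:ℝ) ≤ M ^ ν) k]
    have hGpos : 0 < Real.exp (-(2*M)) * (M ^ ν) ^ k := by positivity
    calc y ^ k / Real.Gamma (ν * k + β) ≤ y ^ k / (Real.exp (-(2*M)) * (M ^ ν) ^ k) := by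
          gcongr
      _ = Real.exp (2 * M) * (y / M ^ ν) ^ k := by
          rw [Real.exp_neg, div_pow]
          have h1 : ((M:ℝ) ^ ν) ^ k ≠ 0 := by positivity
          have h2 : Real.exp (2*M) ≠ 0 := (Real.exp_pos _).ne'
          field_simp
  · exact (summable_geometric_of_lt_one hr0 hr).mul_left _

theorem haubold_mathai_solution (ν c N₀ : ℝ) (hν : ν > 0) (hc : c > 0)
    (N : ℝ → ℝ)
    (hN : ∀ t : ℝ, N t = N₀ * ∑' k : ℕ,
      (-1 : ℝ) ^ k * (c * t) ^ (ν * k) / Real.Gamma (ν * k + 1)) :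
    ∀ t : ℝ, t > 0 →
      N t - N₀ = -(c ^ ν) *
        ((1 / Real.Gamma ν) * ∫ s in (0:ℝ)..t, (t - s) ^ (ν - 1) * N s) := by
  intro t ht
  have hct : (0:ℝ) < c * t := mul_pos hc ht
  have hΓν : 0 < Real.Gamma ν := Real.Gamma_pos_of_pos hν
  set y : ℝ := (c * t) ^ ν with hy
  have hy0 : 0 ≤ y := Real.rpow_nonneg hct.le ν
  have hΓkpos : ∀ k : ℕ, 0 < Real.Gamma (ν * k + 1) := by
    intro k
    exact Real.Gamma_pos_of_pos (by positivity)
  have hsum : Summable (fun k : ℕ => (-1:ℝ) ^ k * (c * t) ^ (ν * k) / Real.Gamma (ν * k + 1)) := by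
    apply Summable.of_norm
    apply ((hm_summable hν le_rfl hy0).congr (fun k => ?_))
    rw [norm_div, norm_mul, norm_pow, norm_neg, norm_one, one_pow, one_mul,
      Real.norm_of_nonneg (Real.rpow_nonneg hct.le _), Real.norm_of_nonneg (hΓkpos k).le,
      Real.rpow_mul_natCast hct.le]
  -- LHS
  have hL : N t - N₀ = N₀ * ∑' k : ℕ,
      (-1:ℝ) ^ (k+1) * (c * t) ^ (ν * ((k+1 : ℕ) : ℝ)) / Real.Gamma (ν * ((k+1 : ℕ) : ℝ) + 1) := by
    rw [hN t, hsum.tsum_eq_zero_add]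
    norm_num [Real.Gamma_one]
    ring
  -- integrability
  have hbase : IntervalIntegrable (fun s : ℝ => (t - s) ^ (ν - 1)) volume 0 t := by
    have h0 : IntervalIntegrable (fun x : ℝ => x ^ (ν - 1)) volume 0 t :=
      intervalIntegral.intervalIntegrable_rpow' (by linarith)
    have h1 := h0.comp_sub_left t
    simp only [sub_zero, sub_self] at h1
    exact h1.symm
  have hII : ∀ k : ℕ, IntervalIntegrable
      (fun s : ℝ => (t - s) ^ (ν - 1) * ((-1:ℝ)^k * (c*s)^(ν*k) / Real.Gamma (ν*k+1))) volume 0 t := by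
    intro k
    apply hbase.mul_continuousOn
    apply Continuous.continuousOn
    apply Continuous.div_const
    exact continuous_const.mul
      ((Real.continuous_rpow_const (by positivity)).comp (continuous_const.mul continuous_id))
  -- beta values
  have hval : ∀ k : ℕ, (∫ s in (0:ℝ)..t, (t - s) ^ (ν - 1) * (c*s)^(ν*k))
      = c ^ (ν*(k:ℝ)) * (Real.Gamma (ν*k+1) * Real.Gamma ν / Real.Gamma (ν*k+1+ν) * t ^ (ν*(k:ℝ)+ν)) := by
    intro k
    have hcongr : Set.EqOn (fun s : ℝ => (t - s) ^ (ν - 1) * (c*s)^(ν*(k:ℝ)))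
        (fun s : ℝ => c ^ (ν*(k:ℝ)) * (s ^ (ν*(k:ℝ)) * (t - s) ^ (ν - 1))) (Set.uIcc 0 t) := by
      intro x hx
      rw [Set.uIcc_of_le ht.le] at hx
      simp only
      rw [Real.mul_rpow hc.le hx.1]
      ring
    rw [intervalIntegral.integral_congr hcongr, intervalIntegral.integral_const_mul,
      hm_beta ν (ν*k) t hν (by positivity) ht]
  -- term values
  have hterm : ∀ k : ℕ, (∫ s in (0:ℝ)..t, (t - s) ^ (ν - 1) * ((-1:ℝ)^k * (c*s)^(ν*k) / Real.Gamma (ν*k+1)))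
      = (-1:ℝ)^k / Real.Gamma (ν*k+1) *
        (c ^ (ν*(k:ℝ)) * (Real.Gamma (ν*k+1) * Real.Gamma ν / Real.Gamma (ν*k+1+ν) * t ^ (ν*(k:ℝ)+ν))) := by
    intro k
    rw [← hval k, ← intervalIntegral.integral_const_mul]
    apply intervalIntegral.integral_congr
    intro x _
    simp only
    ring
  -- norm integrals
  have hnormint : ∀ k : ℕ, (∫ s in Set.Ioc (0:ℝ) t,
        ‖(t - s) ^ (ν - 1) * ((-1:ℝ)^k * (c*s)^(ν*k) / Real.Gamma (ν*k+1))‖)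
      = 1 / Real.Gamma (ν*k+1) *
        (c ^ (ν*(k:ℝ)) * (Real.Gamma (ν*k+1) * Real.Gamma ν / Real.Gamma (ν*k+1+ν) * t ^ (ν*(k:ℝ)+ν))) := by
    intro k
    have heq : ∀ x ∈ Set.Ioc (0:ℝ) t,
        ‖(t - x) ^ (ν - 1) * ((-1:ℝ)^k * (c*x)^(ν*k) / Real.Gamma (ν*k+1))‖
        = 1 / Real.Gamma (ν*k+1) * ((t - x) ^ (ν - 1) * (c*x)^(ν*(k:ℝ))) := by
      intro x hx
      obtain ⟨hx1, hx2⟩ := hx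
      have h1 : (0:ℝ) ≤ t - x := by linarith
      rw [norm_mul, norm_div, norm_mul, norm_pow, norm_neg, norm_one, one_pow, one_mul,
        Real.norm_of_nonneg (Real.rpow_nonneg h1 _),
        Real.norm_of_nonneg (Real.rpow_nonneg (mul_nonneg hc.le hx1.le) _),
        Real.norm_of_nonneg (hΓkpos k).le]
      ring
    rw [setIntegral_congr_fun measurableSet_Ioc heq, ← intervalIntegral.integral_of_le ht.le,
      intervalIntegral.integral_const_mul, hval k]
  -- summability of norm integrals
  have hFsum : Summable (fun k : ℕ => ∫ s in Set.Ioc (0:ℝ) t,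
      ‖(t - s) ^ (ν - 1) * ((-1:ℝ)^k * (c*s)^(ν*k) / Real.Gamma (ν*k+1))‖) := by
    apply Summable.congr _ (fun k => (hnormint k).symm)
    have base : Summable (fun k : ℕ => Real.Gamma ν * t ^ ν * (y ^ k / Real.Gamma (ν*k+(1+ν)))) :=
      (hm_summable hν (by linarith) hy0).mul_left _
    apply base.congr
    intro k
    have hΓk := (hΓkpos k).ne'
    have hΓk2 : Real.Gamma (ν*k+(1+ν)) ≠ 0 := (Real.Gamma_pos_of_pos (by positivity)).ne'
    have e2 : t ^ (ν*(k:ℝ)+ν) = (t ^ ν) ^ k * t ^ ν := by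
      rw [Real.rpow_add ht, Real.rpow_mul_natCast ht.le]
    have e3 : c ^ (ν*(k:ℝ)) = (c ^ ν) ^ k := Real.rpow_mul_natCast hc.le ν k
    have e4 : y ^ k = (c ^ ν) ^ k * (t ^ ν) ^ k := by
      rw [hy, Real.mul_rpow hc.le ht.le, mul_pow]
    rw [e2, e3, show ν*(k:ℝ)+1+ν = ν*(k:ℝ)+(1+ν) by ring, e4]
    field_simp
  -- main integral identity
  have hint_eq : (∫ s in (0:ℝ)..t, (t - s) ^ (ν - 1) * N s)
      = N₀ * ∑' k : ℕ, (∫ s in (0:ℝ)..t,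
          (t - s) ^ (ν - 1) * ((-1:ℝ)^k * (c*s)^(ν*k) / Real.Gamma (ν*k+1))) := by
    have hpt : ∀ s : ℝ, (t - s) ^ (ν - 1) * N s
        = N₀ * ∑' k : ℕ, (t - s) ^ (ν - 1) * ((-1:ℝ)^k * (c*s)^(ν*k) / Real.Gamma (ν*k+1)) := by
      intro s
      rw [hN s, tsum_mul_left]
      ring
    rw [intervalIntegral.integral_congr (fun x _ => hpt x), intervalIntegral.integral_const_mul]
    congr 1
    rw [intervalIntegral.integral_of_le ht.le,
      ← MeasureTheory.integral_tsum_of_summable_integral_norm (fun k => (hII k).1) hFsum]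
    exact tsum_congr fun k => (intervalIntegral.integral_of_le ht.le).symm
  -- finish
  calc N t - N₀
      = N₀ * ∑' k : ℕ, (-1:ℝ) ^ (k+1) * (c * t) ^ (ν * ((k+1 : ℕ) : ℝ))
          / Real.Gamma (ν * ((k+1 : ℕ) : ℝ) + 1) := hL
    _ = N₀ * ∑' k : ℕ, (-(c ^ ν) * (1 / Real.Gamma ν) *
          ((-1:ℝ)^k / Real.Gamma (ν*k+1) *
            (c ^ (ν*(k:ℝ)) * (Real.Gamma (ν*k+1) * Real.Gamma ν / Real.Gamma (ν*k+1+ν) * t ^ (ν*(k:ℝ)+ν))))) := by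
      congr 1
      apply tsum_congr
      intro k
      have hΓk := (hΓkpos k).ne'
      have hΓk2 : Real.Gamma (ν*k+1+ν) ≠ 0 := (Real.Gamma_pos_of_pos (by positivity)).ne'
      have harg : ν * ((k+1 : ℕ) : ℝ) + 1 = ν * k + 1 + ν := by push_cast; ring
      have hexp : (c*t) ^ (ν * ((k+1 : ℕ) : ℝ)) = c ^ (ν*(k:ℝ)) * c ^ ν * t ^ (ν*(k:ℝ)+ν) := by
        rw [show ν * ((k+1 : ℕ) : ℝ) = ν*(k:ℝ)+ν by push_cast; ring,
          Real.mul_rpow hc.le ht.le, Real.rpow_add hc]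
      rw [harg, hexp]
      field_simp
      ring
    _ = N₀ * (-(c ^ ν) * (1 / Real.Gamma ν) * ∑' k : ℕ,
          ((-1:ℝ)^k / Real.Gamma (ν*k+1) *
            (c ^ (ν*(k:ℝ)) * (Real.Gamma (ν*k+1) * Real.Gamma ν / Real.Gamma (ν*k+1+ν) * t ^ (ν*(k:ℝ)+ν))))) := by
      rw [tsum_mul_left]
    _ = -(c ^ ν) * ((1 / Real.Gamma ν) * ∫ s in (0:ℝ)..t, (t - s) ^ (ν - 1) * N s) := by
      rw [hint_eq, tsum_congr hterm]
      ring
end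

section
/- For real ν > 0, μ > 0, and a function f : [0,∞) → ℝ continuous with at most exponential growth, the Sumudu transform of the Riemann–Liouville fractional integral satisfies S[₀D_t^{−ν} f](u) = u^ν · S[f](u) for all sufficiently small u > 0. -/
open Real MeasureTheory intervalIntegral

noncomputable def sumudu (f : ℝ → ℝ) (u : ℝ) : ℝ :=
  ∫ t in Set.Ioi (0:ℝ), f (u * t) * Real.exp (-t)

noncomputable def rlIntegral (ν : ℝ) (f : ℝ → ℝ) (t : ℝ) : ℝ :=
  (1 / Real.Gamma ν) * ∫ s in (0:ℝ)..t, (t - s) ^ (ν - 1) * f s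

theorem sumudu_riemann_liouville (ν μ : ℝ) (hν : ν > 0) (hμ : μ > 0)
    (f : ℝ → ℝ) (hf : Continuous f)
    (hgrowth : ∃ M C : ℝ, ∀ t : ℝ, 0 ≤ t → |f t| ≤ M * Real.exp (C * t)) :
    ∃ u₀ > 0, ∀ u : ℝ, 0 < u → u < u₀ →
      sumudu (rlIntegral ν f) u = u ^ ν * sumudu f u := by
  classical
  obtain ⟨M, C, hMC⟩ := hgrowth
  refine ⟨(2 * (|C| + 1))⁻¹, by positivity, fun u hu hu₀ => ?_⟩
  have hΓ : 0 < Real.Gamma ν := Real.Gamma_pos_of_pos hν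
  have hM0 : 0 ≤ M := le_trans (abs_nonneg _) (by simpa using hMC 0 le_rfl)
  set g : ℝ → ℝ := fun σ => f (u * σ) with hgdef
  have hgc : Continuous g := hf.comp (continuous_const.mul continuous_id)
  -- exponential growth bound for g
  have hgb : ∀ σ : ℝ, 0 ≤ σ → |g σ| ≤ M * Real.exp (σ / 2) := by
    intro σ hσ
    have h1 : |f (u * σ)| ≤ M * Real.exp (C * (u * σ)) := hMC _ (by positivity)
    refine h1.trans (mul_le_mul_of_nonneg_left (Real.exp_le_exp.2 ?_) hM0)
    have h2 : C * (u * σ) ≤ |C| * (u * σ) :=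
      mul_le_mul_of_nonneg_right (le_abs_self C) (by positivity)
    have huC : |C| * u ≤ 1 / 2 := by
      have h3 : u ≤ (2 * (|C| + 1))⁻¹ := le_of_lt hu₀
      have h4 : (|C| + 1) * (2 * (|C| + 1))⁻¹ = 1 / 2 := by
        have : |C| + 1 ≠ 0 := by positivity
        field_simp
      calc |C| * u ≤ (|C| + 1) * (2 * (|C| + 1))⁻¹ :=
            mul_le_mul (by linarith [abs_nonneg C]) h3 (le_of_lt hu) (by positivity)
        _ = 1 / 2 := h4
    calc C * (u * σ) ≤ |C| * (u * σ) := h2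
      _ = (|C| * u) * σ := by ring
      _ ≤ (1 / 2) * σ := mul_le_mul_of_nonneg_right huC hσ
      _ = σ / 2 := by ring
  -- the kernel
  set S : Set (ℝ × ℝ) := {p : ℝ × ℝ | 0 < p.2 ∧ p.2 < p.1} with hSdef
  have hSm : MeasurableSet S :=
    (measurableSet_lt measurable_const measurable_snd).inter
      (measurableSet_lt measurable_snd measurable_fst)
  set φ : ℝ × ℝ → ℝ := fun p => (p.1 - p.2) ^ (ν - 1) * g p.2 * Real.exp (-p.1) with hφdef
  have hφm : Measurable φ := by
    apply Measurable.mul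
    · exact ((measurable_fst.sub measurable_snd).pow measurable_const).mul
        (hgc.measurable.comp measurable_snd)
    · exact Real.measurable_exp.comp measurable_fst.neg
  set K : ℝ × ℝ → ℝ := S.indicator φ with hKdef
  have hKm : Measurable K := hφm.indicator hSm
  have hKzero : ∀ t σ : ℝ, ¬ (0 < σ ∧ σ < t) → K (t, σ) = 0 := by
    intro t σ h
    simp only [hKdef, Set.indicator_apply, hSdef, Set.mem_setOf_eq]
    exact if_neg h
  -- shift lemmas
  have hshift : ∀ (F : ℝ → ℝ) (σ : ℝ),
      ∫ x in Set.Ioi (0:ℝ), F (x + σ) = ∫ t in Set.Ioi σ, F t := by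
    intro F σ
    have := (MeasureTheory.measurePreserving_add_right volume σ).setIntegral_preimage_emb
      (measurableEmbedding_addRight σ) F (Set.Ioi σ)
    simpa using this
  have hshiftInt : ∀ (G : ℝ → ℝ), IntegrableOn G (Set.Ioi (0:ℝ)) → ∀ σ : ℝ,
      IntegrableOn (fun t => G (t - σ)) (Set.Ioi σ) := by
    intro G hG σ
    have := ((MeasureTheory.measurePreserving_add_right volume (-σ)).integrableOn_comp_preimage
      (measurableEmbedding_addRight (-σ)) (s := Set.Ioi (0:ℝ)) (f := G)).2 hG
    simpa [Set.preimage_add_const_Ioi, sub_eq_add_neg, Function.comp_def] using this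
  -- value of the inner t-integral of the Gamma-type integrand
  have hGval : ∀ σ : ℝ,
      (∫ t in Set.Ioi σ, (t - σ) ^ (ν - 1) * Real.exp (-t)) = Real.exp (-σ) * Real.Gamma ν := by
    intro σ
    rw [← hshift (fun t => (t - σ) ^ (ν - 1) * Real.exp (-t)) σ]
    have heq : ∀ x : ℝ, (x + σ - σ) ^ (ν - 1) * Real.exp (-(x + σ))
        = Real.exp (-σ) * (Real.exp (-x) * x ^ (ν - 1)) := by
      intro x
      have h1 : -(x + σ) = -x + -σ := by ring
      rw [add_sub_cancel_right, h1, Real.exp_add]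
      ring
    simp only [heq]
    rw [MeasureTheory.integral_const_mul, ← Real.Gamma_eq_integral hν]
  -- integrability of the Gamma-type integrand on Ioi σ
  have hGInt : ∀ σ : ℝ, IntegrableOn (fun t => (t - σ) ^ (ν - 1) * Real.exp (-t)) (Set.Ioi σ) := by
    intro σ
    have h1 : IntegrableOn (fun t => Real.exp (-(t - σ)) * (t - σ) ^ (ν - 1)) (Set.Ioi σ) :=
      hshiftInt _ (Real.GammaIntegral_convergent hν) σ
    have h2 := h1.const_mul (Real.exp (-σ))
    refine MeasureTheory.IntegrableOn.congr_fun h2 (fun t _ => ?_) measurableSet_Ioi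
    have h3 : -σ + -(t - σ) = -t := by ring
    rw [← mul_assoc, ← Real.exp_add, h3]
    ring
  -- K as a function of t, for fixed σ > 0
  have hKt : ∀ σ : ℝ, 0 < σ → (fun t => K (t, σ))
      = fun t => (Set.Ioi σ).indicator (fun t => (t - σ) ^ (ν - 1) * Real.exp (-t)) t * g σ := by
    intro σ hσ
    funext t
    simp only [hKdef, Set.indicator_apply, hSdef, Set.mem_setOf_eq, Set.mem_Ioi, hφdef]
    by_cases h : σ < t
    · rw [if_pos ⟨hσ, h⟩, if_pos h]; ring
    · rw [if_neg (fun hc => h hc.2), if_neg h, zero_mul]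
  have hKnt : ∀ σ : ℝ, 0 < σ → (fun t => ‖K (t, σ)‖)
      = fun t => (Set.Ioi σ).indicator (fun t => (t - σ) ^ (ν - 1) * Real.exp (-t)) t * |g σ| := by
    intro σ hσ
    funext t
    simp only [hKdef, Set.indicator_apply, hSdef, Set.mem_setOf_eq, Set.mem_Ioi, hφdef,
      Real.norm_eq_abs]
    by_cases h : σ < t
    · rw [if_pos ⟨hσ, h⟩, if_pos h, abs_mul, abs_mul,
        abs_of_nonneg (Real.rpow_nonneg (by linarith) _), abs_of_pos (Real.exp_pos _)]
      ring
    · rw [if_neg (fun hc => h hc.2), if_neg h, abs_zero, zero_mul]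
  -- values of the inner t-integrals
  have hIt : ∀ σ : ℝ, 0 < σ →
      (∫ t, K (t, σ)) = g σ * Real.exp (-σ) * Real.Gamma ν := by
    intro σ hσ
    rw [hKt σ hσ, MeasureTheory.integral_mul_const,
      MeasureTheory.integral_indicator measurableSet_Ioi, hGval σ]
    ring
  have hItn : ∀ σ : ℝ, 0 < σ →
      (∫ t, ‖K (t, σ)‖) = |g σ| * (Real.exp (-σ) * Real.Gamma ν) := by
    intro σ hσ
    rw [hKnt σ hσ, MeasureTheory.integral_mul_const,
      MeasureTheory.integral_indicator measurableSet_Ioi, hGval σ]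
    ring
  -- t-integrability for each σ
  have hItInt : ∀ σ : ℝ, Integrable (fun t => K (t, σ)) := by
    intro σ
    by_cases hσ : 0 < σ
    · rw [hKt σ hσ]
      exact (((integrable_indicator_iff measurableSet_Ioi).2 (hGInt σ))).mul_const _
    · have hz : (fun t => K (t, σ)) = fun _ => (0:ℝ) := by
        funext t; exact hKzero t σ (fun h => hσ h.1)
      rw [hz]
      exact integrable_zero _ _ _
  -- joint integrability of K
  have hKint : Integrable K (volume.prod volume) := by
    rw [MeasureTheory.integrable_prod_iff' hKm.aestronglyMeasurable]
    constructor
    · exact Filter.Eventually.of_forall hItInt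
    · have hmeas : AEStronglyMeasurable (fun σ => ∫ t, ‖K (t, σ)‖) volume :=
        (hKm.norm.stronglyMeasurable.integral_prod_left').aestronglyMeasurable
      have hdom : Integrable ((Set.Ioi (0:ℝ)).indicator
          (fun σ => (M * Real.Gamma ν) * Real.exp (-(1/2) * σ))) := by
        rw [integrable_indicator_iff measurableSet_Ioi]
        exact (exp_neg_integrableOn_Ioi 0 (by norm_num : (0:ℝ) < 1/2)).const_mul _
      refine hdom.mono hmeas (Filter.Eventually.of_forall fun σ => ?_)
      by_cases hσ : 0 < σ
      · rw [hItn σ hσ, Set.indicator_of_mem (Set.mem_Ioi.2 hσ)]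
        have hnn : (0:ℝ) ≤ |g σ| * (Real.exp (-σ) * Real.Gamma ν) := by positivity
        rw [Real.norm_eq_abs, abs_of_nonneg hnn]
        have hexp : Real.exp (σ / 2) * Real.exp (-σ) = Real.exp (-(1/2) * σ) := by
          rw [← Real.exp_add]; congr 1; ring
        calc |g σ| * (Real.exp (-σ) * Real.Gamma ν)
            ≤ (M * Real.exp (σ / 2)) * (Real.exp (-σ) * Real.Gamma ν) :=
              mul_le_mul_of_nonneg_right (hgb σ hσ.le) (by positivity)
          _ = M * Real.Gamma ν * Real.exp (-(1/2) * σ) := by rw [← hexp]; ring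
          _ ≤ ‖M * Real.Gamma ν * Real.exp (-(1/2) * σ)‖ := le_abs_self _
      · have h0 : (fun x : ℝ => ‖K (x, σ)‖) = fun _ => (0:ℝ) := by
          funext x; rw [hKzero x σ (fun h => hσ h.1), norm_zero]
        rw [h0, MeasureTheory.integral_zero, norm_zero]
        exact norm_nonneg _
  -- Fubini
  have hswap : (∫ t, ∫ σ, K (t, σ)) = ∫ σ, ∫ t, K (t, σ) := by
    have : Function.uncurry (fun t σ : ℝ => K (t, σ)) = K := rfl
    exact MeasureTheory.integral_integral_swap (this ▸ hKint)
  -- compute the σ-side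
  have hR : (∫ σ, ∫ t, K (t, σ)) = Real.Gamma ν * sumudu f u := by
    rw [← MeasureTheory.setIntegral_eq_integral_of_forall_compl_eq_zero
      (s := Set.Ioi (0:ℝ)) (fun σ hσ => ?_)]
    · have hcongr : ∫ σ in Set.Ioi (0:ℝ), (∫ t, K (t, σ))
          = ∫ σ in Set.Ioi (0:ℝ), g σ * Real.exp (-σ) * Real.Gamma ν :=
        MeasureTheory.setIntegral_congr_fun measurableSet_Ioi (fun σ hσ => hIt σ hσ)
      rw [hcongr, MeasureTheory.integral_mul_const]
      have : sumudu f u = ∫ σ in Set.Ioi (0:ℝ), g σ * Real.exp (-σ) := rfl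
      rw [this, mul_comm]
    · have hz : (fun t => K (t, σ)) = fun _ => (0:ℝ) := by
        funext t
        exact hKzero t σ (fun h => hσ (Set.mem_Ioi.2 h.1))
      rw [hz]
      simp
  -- compute the t-side: relate to the RL integral
  have hL : sumudu (rlIntegral ν f) u = (u ^ ν / Real.Gamma ν) * ∫ t, ∫ σ, K (t, σ) := by
    have hstep : ∀ t : ℝ, t ∈ Set.Ioi (0:ℝ) →
        rlIntegral ν f (u * t) * Real.exp (-t) = (u ^ ν / Real.Gamma ν) * ∫ σ, K (t, σ) := by
      intro t ht
      have ht0 : 0 < t := ht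
      -- substitution s = u σ
      have hsub : (∫ s in (0:ℝ)..(u*t), (u*t - s) ^ (ν - 1) * f s)
          = u ^ ν * ∫ σ in (0:ℝ)..t, (t - σ) ^ (ν - 1) * g σ := by
        have h1 := intervalIntegral.smul_integral_comp_mul_left
          (a := 0) (b := t) (fun s => (u*t - s) ^ (ν - 1) * f s) u
        rw [mul_zero] at h1
        rw [← h1, smul_eq_mul]
        have h2 : ∫ x in (0:ℝ)..t, (u*t - u*x) ^ (ν - 1) * f (u*x)
            = ∫ x in (0:ℝ)..t, u ^ (ν - 1) * ((t - x) ^ (ν - 1) * g x) := by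
          apply intervalIntegral.integral_congr
          intro x hx
          rw [Set.uIcc_of_le ht0.le] at hx
          have hx2 : x ≤ t := hx.2
          show (u*t - u*x) ^ (ν - 1) * f (u*x) = u ^ (ν - 1) * ((t - x) ^ (ν - 1) * g x)
          have h3 : u*t - u*x = u * (t - x) := by ring
          rw [h3, Real.mul_rpow hu.le (by linarith)]
          simp only [hgdef]
          ring
        rw [h2, intervalIntegral.integral_const_mul]
        have hpow : u * (u ^ (ν - 1) * ∫ x in (0:ℝ)..t, (t - x) ^ (ν - 1) * g x)
            = u ^ ν * ∫ x in (0:ℝ)..t, (t - x) ^ (ν - 1) * g x := by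
          have h4 : u * u ^ (ν - 1) = u ^ ν := by
            have h5 : u ^ ν = u ^ (1 + (ν - 1)) := by ring_nf
            rw [h5, Real.rpow_add hu, Real.rpow_one]
          rw [← mul_assoc, h4]
        rw [hpow]
      -- inner σ-integral of K for fixed t
      have hinner : (∫ σ, K (t, σ))
          = (∫ σ in (0:ℝ)..t, (t - σ) ^ (ν - 1) * g σ) * Real.exp (-t) := by
        have h1 : (fun σ => K (t, σ))
            = (Set.Ioo (0:ℝ) t).indicator (fun σ => (t - σ) ^ (ν - 1) * g σ * Real.exp (-t)) := by
          funext σ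
          simp only [hKdef, Set.indicator_apply, hSdef, Set.mem_setOf_eq, Set.mem_Ioo, hφdef]
        rw [h1, MeasureTheory.integral_indicator measurableSet_Ioo,
          ← MeasureTheory.integral_Ioc_eq_integral_Ioo,
          ← intervalIntegral.integral_of_le ht0.le, intervalIntegral.integral_mul_const]
      rw [hinner, rlIntegral, hsub]
      field_simp
    calc sumudu (rlIntegral ν f) u
        = ∫ t in Set.Ioi (0:ℝ), rlIntegral ν f (u * t) * Real.exp (-t) := rfl
      _ = ∫ t in Set.Ioi (0:ℝ), (u ^ ν / Real.Gamma ν) * ∫ σ, K (t, σ) :=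
          MeasureTheory.setIntegral_congr_fun measurableSet_Ioi hstep
      _ = (u ^ ν / Real.Gamma ν) * ∫ t in Set.Ioi (0:ℝ), ∫ σ, K (t, σ) := by
          rw [MeasureTheory.integral_const_mul]
      _ = (u ^ ν / Real.Gamma ν) * ∫ t, ∫ σ, K (t, σ) := by
          rw [MeasureTheory.setIntegral_eq_integral_of_forall_compl_eq_zero
            (fun t ht => ?_)]
          have hz : (fun σ => K (t, σ)) = fun _ => (0:ℝ) := by
            funext σ
            refine hKzero t σ (fun h => ht (Set.mem_Ioi.2 (h.1.trans h.2)))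
          rw [hz]
          simp
  rw [hL, hswap, hR]
  field_simp
end

section
/- For real β > 0 and real λ with |λ u^ν| < 1 (u > 0, ν > 0), the Sumudu transform of t ↦ t^{β−1} E_{ν,β}(−λ t^ν) satisfies S[t^{β−1}E_{ν,β}(−λ t^ν)](u) = Σ_{n=0}^∞ (−λ)^n u^{νn+β−1}, i.e. it equals u^{β−1}/(1 + λ u^ν). -/
open Real MeasureTheory

noncomputable def mittagLeffler (α β x : ℝ) : ℝ := ∑' n : ℕ, x ^ n / Real.Gamma (α * n + β)

theorem sumudu_mittagLeffler (ν β lam u : ℝ) (hν : ν > 0) (hβ : β > 0) (hu : u > 0)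
    (h : |lam * u ^ ν| < 1) :
    (∫ t in Set.Ioi (0:ℝ),
        ((u * t) ^ (β - 1) * mittagLeffler ν β (-lam * (u * t) ^ ν)) * Real.exp (-t))
      = ∑' n : ℕ, (-lam) ^ n * u ^ (ν * n + β - 1) ∧
    (∫ t in Set.Ioi (0:ℝ),
        ((u * t) ^ (β - 1) * mittagLeffler ν β (-lam * (u * t) ^ ν)) * Real.exp (-t))
      = u ^ (β - 1) / (1 + lam * u ^ ν) := by
  set F : ℕ → ℝ → ℝ := fun n t =>
    ((-lam) ^ n * u ^ (ν * n + β - 1) / Real.Gamma (ν * n + β)) *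
      (Real.exp (-t) * t ^ (ν * n + β - 1)) with hF
  have hs : ∀ n : ℕ, (0:ℝ) < ν * n + β := fun n =>
    add_pos_of_nonneg_of_pos (mul_nonneg hν.le (Nat.cast_nonneg n)) hβ
  have hΓpos : ∀ n : ℕ, 0 < Real.Gamma (ν * n + β) := fun n => Real.Gamma_pos_of_pos (hs n)
  -- integral of each F n
  have hint : ∀ n : ℕ, ∫ t in Set.Ioi (0:ℝ), F n t
      = (-lam) ^ n * u ^ (ν * n + β - 1) := by
    intro n
    rw [hF]
    simp only
    rw [MeasureTheory.integral_const_mul, ← Real.Gamma_eq_integral (hs n)]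
    field_simp
  -- integrability
  have hintg : ∀ n : ℕ, IntegrableOn (F n) (Set.Ioi (0:ℝ)) := by
    intro n
    exact (Real.GammaIntegral_convergent (hs n)).const_mul _
  -- norm integrals
  have hnorm : ∀ n : ℕ, (∫ t in Set.Ioi (0:ℝ), ‖F n t‖)
      = |lam * u ^ ν| ^ n * u ^ (β - 1) := by
    intro n
    have h1 : ∀ t ∈ Set.Ioi (0:ℝ), ‖F n t‖
        = (|lam| ^ n * u ^ (ν * n + β - 1) / Real.Gamma (ν * n + β)) *
            (Real.exp (-t) * t ^ (ν * n + β - 1)) := by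
      intro t ht
      rw [hF]
      simp only [norm_mul, Real.norm_eq_abs, abs_mul, abs_div, abs_pow, abs_neg,
        abs_of_pos (Real.exp_pos _), abs_of_pos (Real.rpow_pos_of_pos hu _),
        abs_of_pos (Real.rpow_pos_of_pos (Set.mem_Ioi.mp ht) _), abs_of_pos (hΓpos n)]
    rw [setIntegral_congr_fun measurableSet_Ioi h1, MeasureTheory.integral_const_mul,
      ← Real.Gamma_eq_integral (hs n)]
    have : |lam| ^ n * u ^ (ν * n + β - 1) = |lam * u ^ ν| ^ n * u ^ (β - 1) := by
      rw [abs_mul, abs_of_pos (Real.rpow_pos_of_pos hu ν), mul_pow,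
        ← Real.rpow_natCast (u ^ ν) n, ← Real.rpow_mul hu.le,
        show ν * n + β - 1 = ν * n + (β - 1) by ring, Real.rpow_add hu]
      ring
    rw [div_mul_eq_mul_div, mul_div_assoc, div_self (hΓpos n).ne', mul_one, this]
  have hsum : Summable fun n : ℕ => ∫ t in Set.Ioi (0:ℝ), ‖F n t‖ := by
    simp_rw [hnorm]
    exact (summable_geometric_of_lt_one (abs_nonneg _) h).mul_right _
  -- pointwise identity
  have hpt : ∀ t ∈ Set.Ioi (0:ℝ),
      ((u * t) ^ (β - 1) * mittagLeffler ν β (-lam * (u * t) ^ ν)) * Real.exp (-t)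
        = ∑' n : ℕ, F n t := by
    intro t ht
    have ht' : (0:ℝ) < t := ht
    have hut : (0:ℝ) < u * t := mul_pos hu ht'
    rw [mittagLeffler, ← tsum_mul_left, ← tsum_mul_right]
    refine tsum_congr fun n => ?_
    have h1 : (-lam * (u * t) ^ ν) ^ n = (-lam) ^ n * (u * t) ^ (ν * n) := by
      rw [mul_pow, Real.rpow_mul hut.le, Real.rpow_natCast]
    have h2 : (u * t) ^ (β - 1) * (u * t) ^ (ν * n)
        = u ^ (ν * n + β - 1) * t ^ (ν * n + β - 1) := by
      rw [← Real.rpow_add hut, show β - 1 + ν * n = ν * n + β - 1 by ring,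
        Real.mul_rpow hu.le ht'.le]
    rw [hF]
    simp only
    rw [h1, show (u*t)^(β-1) * ((-lam)^n * (u*t)^(ν*n) / Real.Gamma (ν*n+β)) * Real.exp (-t)
      = ((u*t)^(β-1) * (u*t)^(ν*n)) * ((-lam)^n / Real.Gamma (ν*n+β) * Real.exp (-t)) from by ring,
      h2]
    ring
  have key : (∫ t in Set.Ioi (0:ℝ),
      ((u * t) ^ (β - 1) * mittagLeffler ν β (-lam * (u * t) ^ ν)) * Real.exp (-t))
        = ∑' n : ℕ, (-lam) ^ n * u ^ (ν * n + β - 1) := by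
    rw [setIntegral_congr_fun measurableSet_Ioi hpt,
      ← MeasureTheory.integral_tsum_of_summable_integral_norm hintg hsum]
    exact tsum_congr hint
  refine ⟨key, key.trans ?_⟩
  have h3 : ∀ n : ℕ, (-lam) ^ n * u ^ (ν * n + β - 1)
      = (-(lam * u ^ ν)) ^ n * u ^ (β - 1) := by
    intro n
    rw [show ν * n + β - 1 = ν * n + (β - 1) by ring, Real.rpow_add hu,
      Real.rpow_mul hu.le, Real.rpow_natCast, neg_mul_eq_neg_mul, mul_pow]
    ring
  simp_rw [h3]
  rw [tsum_mul_right, tsum_geometric_of_abs_lt_one (by rwa [abs_neg]), sub_neg_eq_add]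
  rw [div_eq_mul_inv, mul_comm]
end

section
/- For real ν > 0 and 0 ≤ x, the two-parameter Mittag-Leffler function at −x with β = 1 satisfies 0 < E_{ν,1}(−x) ≤ 1 when 0 < ν ≤ 1. -/
open Real

open MeasureTheory

-- Gamma ratio lower bound from log-convexity
lemma gamma_ratio {ν s : ℝ} (hν : 0 < ν) (hν1 : ν ≤ 1) (hs : 1 ≤ s) :
    Real.Gamma s * s ^ ν ≤ 2 * Real.Gamma (s + ν) := by
  have hs0 : 0 < s := lt_of_lt_of_le one_pos hs
  have hsν : 0 < s + ν := by linarith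
  have hG : 0 < Real.Gamma (s + ν) := Real.Gamma_pos_of_pos hsν
  have hGs : 0 < Real.Gamma s := Real.Gamma_pos_of_pos hs0
  -- log Γ(s+1) ≤ ν log Γ(s+ν) + (1-ν) log Γ(s+ν+1)
  have hconv := convexOn_log_Gamma.2 (Set.mem_Ioi.mpr hsν) (Set.mem_Ioi.mpr (by linarith : (0:ℝ) < s + ν + 1)) (le_of_lt hν) (by linarith : (0:ℝ) ≤ 1 - ν) (by ring)
  have hcomb : ν • (s + ν) + (1 - ν) • (s + ν + 1) = s + 1 := by
    simp [smul_eq_mul]; ring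
  rw [hcomb] at hconv
  simp only [Function.comp_apply, smul_eq_mul] at hconv
  have hrec : Real.Gamma (s + ν + 1) = (s + ν) * Real.Gamma (s + ν) := by
    rw [Real.Gamma_add_one (ne_of_gt hsν)]
  have hrec1 : Real.Gamma (s + 1) = s * Real.Gamma s := Real.Gamma_add_one (ne_of_gt hs0)
  rw [hrec, hrec1, Real.log_mul (ne_of_gt hsν) (ne_of_gt hG)] at hconv
  -- so log (s Γ s) ≤ log Γ(s+ν) + (1-ν) log (s+ν)
  have key : s * Real.Gamma s ≤ Real.Gamma (s + ν) * (s + ν) ^ (1 - ν) := by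
    have h1 : Real.log (s * Real.Gamma s) ≤ Real.log (Real.Gamma (s + ν) * (s + ν) ^ (1 - ν)) := by
      rw [Real.log_mul (ne_of_gt hG) (ne_of_gt (Real.rpow_pos_of_pos hsν _)), Real.log_rpow hsν]
      nlinarith [hconv]
    have := Real.exp_le_exp.mpr h1
    rwa [Real.exp_log (by positivity), Real.exp_log (by positivity)] at this
  -- (s+ν)^(1-ν) ≤ 2 s^(1-ν)
  have h2 : (s + ν) ^ (1 - ν) ≤ 2 * s ^ (1 - ν) := by
    have : (s + ν) ^ (1-ν) ≤ (2*s) ^ (1-ν) :=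
      Real.rpow_le_rpow (le_of_lt hsν) (by linarith) (by linarith)
    calc (s + ν) ^ (1-ν) ≤ (2*s) ^ (1-ν) := this
      _ = 2 ^ (1-ν) * s ^ (1-ν) := Real.mul_rpow (by norm_num) (le_of_lt hs0)
      _ ≤ 2 * s ^ (1-ν) := by
          gcongr
          calc (2:ℝ) ^ (1-ν) ≤ 2 ^ (1:ℝ) := Real.rpow_le_rpow_of_exponent_le (by norm_num) (by linarith)
            _ = 2 := by norm_num
  have h3 : s * Real.Gamma s ≤ 2 * Real.Gamma (s + ν) * s ^ (1 - ν) := by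
    calc s * Real.Gamma s ≤ Real.Gamma (s + ν) * (s + ν) ^ (1-ν) := key
      _ ≤ Real.Gamma (s + ν) * (2 * s ^ (1-ν)) := by gcongr
      _ = 2 * Real.Gamma (s + ν) * s ^ (1-ν) := by ring
  -- divide by s^(1-ν): Γ s * s^ν = s Γ s / s^(1-ν)
  have hsp : (0:ℝ) < s ^ (1-ν) := Real.rpow_pos_of_pos hs0 _
  have hmul : s ^ ν * s ^ (1 - ν) = s := by
    rw [← Real.rpow_add hs0]; norm_num
  rw [← mul_le_mul_iff_of_pos_right hsp, mul_assoc, hmul]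
  nlinarith [h3]

lemma ml_summable {ν : ℝ} (hν : 0 < ν) (hν1 : ν ≤ 1) {y : ℝ} (hy : 0 ≤ y) :
    Summable (fun n : ℕ => y ^ n / Real.Gamma (ν * n + 1)) := by
  apply summable_of_ratio_norm_eventually_le (r := 1/2) (by norm_num)
  obtain ⟨N, hN⟩ := exists_nat_ge ((4 * y) ^ (1/ν) / ν)
  rw [Filter.eventually_atTop]
  refine ⟨N, fun n hn => ?_⟩
  have hs1 : (1:ℝ) ≤ ν * n + 1 := by nlinarith [mul_nonneg (le_of_lt hν) (Nat.cast_nonneg (α := ℝ) n)]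
  have hs0 : (0:ℝ) < ν * n + 1 := by positivity
  have hG : 0 < Real.Gamma (ν * n + 1) := Real.Gamma_pos_of_pos hs0
  have hG' : 0 < Real.Gamma (ν * (n+1) + 1) := Real.Gamma_pos_of_pos (by positivity)
  have hrpos : (0:ℝ) < (ν * n + 1) ^ ν := Real.rpow_pos_of_pos hs0 _
  -- (ν n + 1)^ν ≥ 4 y
  have h4y : 4 * y ≤ (ν * n + 1) ^ ν := by
    have hbase : (4*y) ^ (1/ν) ≤ ν * n + 1 := by
      have : (4*y) ^ (1/ν) ≤ ν * N := by
        rw [div_le_iff₀ hν] at hN; linarith [hN]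
      have hnN : (ν : ℝ) * N ≤ ν * n := by
        have : (N:ℝ) ≤ n := Nat.cast_le.mpr hn
        nlinarith
      linarith
    calc 4 * y = ((4*y) ^ (1/ν)) ^ ν := by
          rw [← Real.rpow_mul (by linarith : (0:ℝ) ≤ 4*y), one_div,
            inv_mul_cancel₀ (ne_of_gt hν), Real.rpow_one]
      _ ≤ (ν * n + 1) ^ ν := Real.rpow_le_rpow (Real.rpow_nonneg (by linarith) _) hbase (le_of_lt hν)
  have hgr := gamma_ratio hν hν1 hs1
  have harg : ν * ((n:ℕ)+1 : ℕ) + 1 = (ν * n + 1) + ν := by push_cast; ring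
  rw [harg]
  have key : y ^ (n+1) / Real.Gamma ((ν * n + 1) + ν) ≤ 1/2 * (y ^ n / Real.Gamma (ν * n + 1)) := by
    have hGν : 0 < Real.Gamma ((ν * n + 1) + ν) := Real.Gamma_pos_of_pos (by positivity)
    rw [div_le_iff₀ hGν]
    have hyA : y * y ^ n ≤ ((ν*n+1) ^ ν / 4) * y ^ n :=
      mul_le_mul_of_nonneg_right (by linarith) (pow_nonneg hy n)
    have hre : y ^ n / Real.Gamma (ν*n+1) * (1/2) * Real.Gamma ((ν*n+1) + ν)
        = y ^ n * Real.Gamma ((ν*n+1) + ν) / (2 * Real.Gamma (ν*n+1)) := by ring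
    rw [mul_comm (1/2 : ℝ), hre, le_div_iff₀ (by positivity)]
    have t1 : 2 * Real.Gamma (ν*n+1) * (y * y ^ n) ≤ 2 * Real.Gamma (ν*n+1) * (((ν*n+1) ^ ν / 4) * y ^ n) :=
      mul_le_mul_of_nonneg_left hyA (by positivity)
    have t2 : Real.Gamma (ν*n+1) * (ν*n+1) ^ ν * y ^ n ≤ 2 * Real.Gamma ((ν*n+1) + ν) * y ^ n :=
      mul_le_mul_of_nonneg_right hgr (pow_nonneg hy n)
    have hp : y ^ (n+1) * (2 * Real.Gamma (ν*n+1)) = 2 * Real.Gamma (ν*n+1) * (y * y ^ n) := by ring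
    have he1 : 2 * Real.Gamma (ν*n+1) * (((ν*n+1) ^ ν / 4) * y ^ n) = Real.Gamma (ν*n+1) * (ν*n+1) ^ ν * y ^ n / 2 := by ring
    have he2 : 2 * Real.Gamma ((ν*n+1) + ν) * y ^ n / 2 = y ^ n * Real.Gamma ((ν*n+1) + ν) := by ring
    linarith [t1, t2, hp, he1, he2]
  calc ‖y ^ (n+1) / Real.Gamma ((ν * n + 1) + ν)‖ = y ^ (n+1) / Real.Gamma ((ν * n + 1) + ν) := by
        rw [Real.norm_of_nonneg (by positivity)]
    _ ≤ 1/2 * (y ^ n / Real.Gamma (ν * n + 1)) := key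
    _ = 1/2 * ‖y ^ n / Real.Gamma (ν * n + 1)‖ := by rw [Real.norm_of_nonneg (by positivity)]

lemma beta_real {a b : ℝ} (ha : 0 < a) (hb : 0 < b) {t : ℝ} (ht : 0 < t) :
    ∫ s in (0:ℝ)..t, s ^ (a-1) * (t - s) ^ (b-1)
      = Real.Gamma a * Real.Gamma b / Real.Gamma (a+b) * t ^ (a+b-1) := by
  have hC := Complex.betaIntegral_scaled (a : ℂ) (b : ℂ) ht
  have hcast : ∫ s in (0:ℝ)..t, ((s:ℂ) ^ ((a:ℂ)-1) * ((t:ℂ) - s) ^ ((b:ℂ)-1))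
      = ((∫ s in (0:ℝ)..t, s ^ (a-1) * (t - s) ^ (b-1) : ℝ) : ℂ) := by
    rw [← intervalIntegral.integral_ofReal]
    apply intervalIntegral.integral_congr
    intro s hs
    rw [Set.uIcc_of_le ht.le] at hs
    push_cast
    rw [Complex.ofReal_cpow hs.1, Complex.ofReal_cpow (by linarith [hs.2] : (0:ℝ) ≤ t - s)]
    push_cast
    ring
  have hbeta : Complex.betaIntegral a b
      = ((Real.Gamma a * Real.Gamma b / Real.Gamma (a+b) : ℝ) : ℂ) := by
    have h := Complex.Gamma_mul_Gamma_eq_betaIntegral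
      (by simpa using ha : 0 < (a:ℂ).re) (by simpa using hb : 0 < (b:ℂ).re)
    have hΓ : Complex.Gamma ((a:ℂ) + b) ≠ 0 := by
      rw [(by push_cast; ring : ((a:ℂ) + b) = ((a+b : ℝ):ℂ)), Complex.Gamma_ofReal]
      exact_mod_cast (ne_of_gt (Real.Gamma_pos_of_pos (by linarith)))
    push_cast
    rw [eq_div_iff (by exact_mod_cast (ne_of_gt (Real.Gamma_pos_of_pos (show (0:ℝ) < a + b by linarith)))), ← Complex.Gamma_ofReal a, ← Complex.Gamma_ofReal b, ← Complex.Gamma_ofReal (a+b)]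
    rw [(by push_cast; ring : (((a+b) : ℝ):ℂ) = (a:ℂ) + b)]
    rw [mul_comm]
    exact h.symm
  have hpow : ((t:ℂ)) ^ ((a:ℂ) + b - 1) = ((t ^ (a+b-1) : ℝ) : ℂ) := by
    rw [Complex.ofReal_cpow ht.le]
    push_cast
    ring_nf
  rw [hcast, hbeta, hpow] at hC
  rw [← Complex.ofReal_mul] at hC
  have := Complex.ofReal_inj.mp hC
  rw [this]; ring

section
variable {ν x : ℝ}

-- the kernel-times-power integral
lemma J_eval (hν : 0 < ν) {t : ℝ} (ht : 0 < t) (c : ℝ) (hc : 0 ≤ c) :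
    ∫ s in (0:ℝ)..t, (t - s) ^ (ν-1) * s ^ c
      = Real.Gamma (c+1) * Real.Gamma ν / Real.Gamma (c+1+ν) * t ^ (c+ν) := by
  have hb := beta_real (a := c+1) (b := ν) (by linarith) hν ht
  have : (∫ s in (0:ℝ)..t, s ^ (c+1-1) * (t - s) ^ (ν-1))
      = ∫ s in (0:ℝ)..t, (t - s) ^ (ν-1) * s ^ c := by
    apply intervalIntegral.integral_congr
    intro s _
    rw [show c+1-1 = c by ring]
    ring
  rw [this] at hb
  rw [hb, show c+1+ν-1 = c+ν by ring]

lemma kernel_integrable (hν : 0 < ν) {t : ℝ} (ht : 0 < t) (c : ℝ) (hc : 0 ≤ c) :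
    IntervalIntegrable (fun s : ℝ => (t - s) ^ (ν-1) * s ^ c) volume 0 t := by
  have h1 : IntervalIntegrable (fun s : ℝ => (t-s) ^ (ν-1)) volume 0 t := by
    have := (intervalIntegral.intervalIntegrable_rpow' (a := t) (b := 0)
      (show (-1:ℝ) < ν-1 by linarith)).comp_sub_left t
    simpa using this
  apply h1.mul_continuousOn
  apply Continuous.continuousOn
  rw [continuous_iff_continuousAt]
  exact fun s => Real.continuousAt_rpow_const s c (Or.inr hc)
end

section
variable {ν x : ℝ}

lemma tpow_le_one {t : ℝ} (ht : 0 < t) (ht1 : t ≤ 1) {c : ℝ} (hc : 0 ≤ c) : t ^ c ≤ 1 :=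
  Real.rpow_le_one ht.le ht1 hc

lemma ml_term_summable (hν : 0 < ν) (hν1 : ν ≤ 1) (hx : 0 ≤ x) {t : ℝ} (ht : 0 ≤ t) (ht1 : t ≤ 1) :
    Summable (fun n : ℕ => (-x) ^ n * t ^ (ν * n) / Real.Gamma (ν * n + 1)) := by
  apply Summable.of_norm
  apply Summable.of_nonneg_of_le (fun n => norm_nonneg _) _ (ml_summable hν hν1 hx)
  intro n
  have hG : 0 < Real.Gamma (ν * n + 1) := Real.Gamma_pos_of_pos (by positivity)
  rw [norm_div, norm_mul, norm_pow, norm_neg, Real.norm_of_nonneg hx,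
    Real.norm_of_nonneg (Real.rpow_nonneg ht _), Real.norm_of_nonneg hG.le]
  have hle : x ^ n * t ^ (ν * n) ≤ x ^ n :=
    mul_le_of_le_one_right (pow_nonneg hx n)
      (Real.rpow_le_one ht ht1 (mul_nonneg hν.le (Nat.cast_nonneg _)))
  exact div_le_div_of_nonneg_right hle hG.le |>.trans_eq rfl

lemma gamma_shift_le (hν : 0 < ν) (hν1 : ν ≤ 1) (n : ℕ) :
    Real.Gamma (ν * n + 1) ≤ 2 * Real.Gamma (ν * n + 1 + ν) := by
  have hs1 : (1:ℝ) ≤ ν * n + 1 := by nlinarith [mul_nonneg hν.le (Nat.cast_nonneg (α := ℝ) n)]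
  have h := gamma_ratio hν hν1 hs1
  have h1 : (1:ℝ) ≤ (ν * n + 1) ^ ν := Real.one_le_rpow hs1 hν.le
  nlinarith [Real.Gamma_pos_of_pos (show (0:ℝ) < ν * n + 1 by positivity)]

lemma ml_inteq (hν : 0 < ν) (hν1 : ν ≤ 1) (hx : 0 ≤ x) {t : ℝ} (ht : 0 < t) (ht1 : t ≤ 1) :
    (∑' n : ℕ, (-x) ^ n * t ^ (ν * n) / Real.Gamma (ν * n + 1))
      = 1 - (x / Real.Gamma ν) *
        ∫ s in (0:ℝ)..t, (t - s) ^ (ν-1) * (∑' n : ℕ, (-x) ^ n * s ^ (ν * n) / Real.Gamma (ν * n + 1)) := by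
  have hΓν : 0 < Real.Gamma ν := Real.Gamma_pos_of_pos hν
  have hGn : ∀ n : ℕ, 0 < Real.Gamma (ν * n + 1) := fun n => Real.Gamma_pos_of_pos (by positivity)
  have hGn' : ∀ n : ℕ, 0 < Real.Gamma (ν * n + 1 + ν) := fun n => Real.Gamma_pos_of_pos (by positivity)
  -- the integral evaluates term by term
  have key : (∫ s in (0:ℝ)..t, (t - s) ^ (ν-1) * (∑' n : ℕ, (-x) ^ n * s ^ (ν * n) / Real.Gamma (ν * n + 1)))
      = Real.Gamma ν * ∑' n : ℕ, (-x) ^ n * t ^ (ν * n + ν) / Real.Gamma (ν * n + 1 + ν) := by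
    have hFi : ∀ n : ℕ, IntegrableOn
        (fun s : ℝ => ((-x) ^ n / Real.Gamma (ν * n + 1)) * ((t - s) ^ (ν-1) * s ^ (ν * n)))
        (Set.Ioc 0 t) volume := by
      intro n
      exact (((kernel_integrable hν ht (ν * n) (mul_nonneg hν.le (Nat.cast_nonneg _))).const_mul _).1 :)
    have hnorm : ∀ n : ℕ, (∫ s in Set.Ioc (0:ℝ) t,
        ‖((-x) ^ n / Real.Gamma (ν * n + 1)) * ((t - s) ^ (ν-1) * s ^ (ν * n))‖)
        = (x ^ n / Real.Gamma (ν * n + 1)) * (Real.Gamma (ν * n + 1) * Real.Gamma ν / Real.Gamma (ν * n + 1 + ν) * t ^ (ν * n + ν)) := by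
      intro n
      have : ∀ s ∈ Set.Ioc (0:ℝ) t,
          ‖((-x) ^ n / Real.Gamma (ν * n + 1)) * ((t - s) ^ (ν-1) * s ^ (ν * n))‖
          = (x ^ n / Real.Gamma (ν * n + 1)) * ((t - s) ^ (ν-1) * s ^ (ν * n)) := by
        intro s hs
        have h1 : (0:ℝ) ≤ (t - s) ^ (ν-1) := Real.rpow_nonneg (by linarith [hs.2]) _
        have h2 : (0:ℝ) ≤ s ^ (ν * n) := Real.rpow_nonneg hs.1.le _
        rw [norm_mul, Real.norm_of_nonneg (mul_nonneg h1 h2), norm_div, norm_pow, norm_neg,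
          Real.norm_of_nonneg hx, Real.norm_of_nonneg (hGn n).le]
      rw [setIntegral_congr_fun measurableSet_Ioc this, integral_const_mul,
        ← intervalIntegral.integral_of_le ht.le, J_eval hν ht (ν * n) (by positivity)]
    -- swap sum and integral
    have hswap := MeasureTheory.integral_tsum_of_summable_integral_norm
      (μ := volume.restrict (Set.Ioc (0:ℝ) t))
      (F := fun (n : ℕ) (s : ℝ) => ((-x) ^ n / Real.Gamma (ν * n + 1)) * ((t - s) ^ (ν-1) * s ^ (ν * n)))
      hFi ?_
    · -- use the swap
      rw [intervalIntegral.integral_of_le ht.le]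
      have hcongr : ∀ s ∈ Set.Ioc (0:ℝ) t,
          (t - s) ^ (ν-1) * (∑' n : ℕ, (-x) ^ n * s ^ (ν * n) / Real.Gamma (ν * n + 1))
          = ∑' n : ℕ, ((-x) ^ n / Real.Gamma (ν * n + 1)) * ((t - s) ^ (ν-1) * s ^ (ν * n)) := by
        intro s hs
        rw [← tsum_mul_left]
        apply tsum_congr; intro n; ring
      rw [setIntegral_congr_fun measurableSet_Ioc hcongr, ← hswap]
      have : ∀ n : ℕ, (∫ s in Set.Ioc (0:ℝ) t,
          ((-x) ^ n / Real.Gamma (ν * n + 1)) * ((t - s) ^ (ν-1) * s ^ (ν * n)))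
          = Real.Gamma ν * ((-x) ^ n * t ^ (ν * n + ν) / Real.Gamma (ν * n + 1 + ν)) := by
        intro n
        rw [integral_const_mul, ← intervalIntegral.integral_of_le ht.le,
          J_eval hν ht (ν * n) (by positivity)]
        field_simp
      rw [tsum_congr this, tsum_mul_left]
    · -- summability of norms
      apply Summable.of_nonneg_of_le (f := fun n : ℕ => (2 * Real.Gamma ν) * (x ^ n / Real.Gamma (ν * n + 1)))
        (fun n => integral_nonneg (fun s => norm_nonneg _)) _ ((ml_summable hν hν1 hx).mul_left _)
      intro n
      rw [hnorm n]
      have htp : t ^ (ν * n + ν) ≤ 1 := Real.rpow_le_one ht.le ht1 (by positivity)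
      have hG2 := gamma_shift_le hν hν1 n
      have e1 : (x ^ n / Real.Gamma (ν * n + 1)) * (Real.Gamma (ν * n + 1) * Real.Gamma ν / Real.Gamma (ν * n + 1 + ν) * t ^ (ν * n + ν))
          = Real.Gamma ν * t ^ (ν * n + ν) * (x ^ n / Real.Gamma (ν * n + 1 + ν)) := by
        field_simp
      rw [e1]
      have h2 : x ^ n / Real.Gamma (ν * n + 1 + ν) ≤ 2 * (x ^ n / Real.Gamma (ν * n + 1)) := by
        rw [div_le_iff₀ (hGn' n),
          show 2 * (x ^ n / Real.Gamma (ν * n + 1)) * Real.Gamma (ν * n + 1 + ν)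
            = (x ^ n * (2 * Real.Gamma (ν * n + 1 + ν))) / Real.Gamma (ν * n + 1) by ring,
          le_div_iff₀ (hGn n)]
        exact mul_le_mul_of_nonneg_left hG2 (pow_nonneg hx n)
      calc Real.Gamma ν * t ^ (ν * n + ν) * (x ^ n / Real.Gamma (ν * n + 1 + ν))
          ≤ Real.Gamma ν * 1 * (2 * (x ^ n / Real.Gamma (ν * n + 1))) := by
            apply mul_le_mul
            · apply mul_le_mul_of_nonneg_left htp hΓν.le
            · exact h2
            · positivity
            · positivity
        _ = (2 * Real.Gamma ν) * (x ^ n / Real.Gamma (ν * n + 1)) := by ring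
  -- now the series manipulation
  rw [key]
  have hsum : Summable (fun n : ℕ => (-x) ^ n * t ^ (ν * n) / Real.Gamma (ν * n + 1)) :=
    ml_term_summable hν hν1 hx ht.le ht1
  have hzero := Summable.tsum_eq_zero_add hsum
  have h0 : (-x) ^ 0 * t ^ (ν * (0:ℕ)) / Real.Gamma (ν * (0:ℕ) + 1) = 1 := by
    norm_num [Real.Gamma_one]
  rw [h0] at hzero
  have hshift : ∀ n : ℕ, (-x) ^ (n+1) * t ^ (ν * ((n:ℕ)+1:ℕ)) / Real.Gamma (ν * ((n:ℕ)+1:ℕ) + 1)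
      = (-x) * ((-x) ^ n * t ^ (ν * n + ν) / Real.Gamma (ν * n + 1 + ν)) := by
    intro n
    have hc : (((n:ℕ)+1:ℕ) : ℝ) = (n : ℝ) + 1 := by push_cast; ring
    rw [hc, show ν * ((n:ℝ)+1) = ν * n + ν by ring, show ν * (n:ℝ) + ν + 1 = ν * n + 1 + ν by ring]
    ring
  rw [tsum_congr hshift, tsum_mul_left] at hzero
  rw [hzero]
  field_simp
  ring
end

section
variable {ν x : ℝ}

lemma ml_u0 (hν : 0 < ν) :
    (∑' n : ℕ, (-x) ^ n * (0:ℝ) ^ (ν * n) / Real.Gamma (ν * n + 1)) = 1 := by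
  rw [tsum_eq_single 0]
  · norm_num [Real.Gamma_one]
  · intro n hn
    have : (0:ℝ) ^ (ν * (n:ℝ)) = 0 := by
      apply Real.zero_rpow
      have : 0 < (n:ℝ) := by exact_mod_cast Nat.pos_of_ne_zero hn
      positivity
    rw [this]
    simp

lemma ml_cont (hν : 0 < ν) (hν1 : ν ≤ 1) (hx : 0 ≤ x) :
    ContinuousOn (fun t : ℝ => ∑' n : ℕ, (-x) ^ n * t ^ (ν * n) / Real.Gamma (ν * n + 1))
      (Set.Icc 0 1) := by
  apply continuousOn_tsum (u := fun n : ℕ => x ^ n / Real.Gamma (ν * n + 1))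
    _ (ml_summable hν hν1 hx)
  · intro n t ht
    have hG : 0 < Real.Gamma (ν * n + 1) := Real.Gamma_pos_of_pos (by positivity)
    rw [norm_div, norm_mul, norm_pow, norm_neg, Real.norm_of_nonneg hx,
      Real.norm_of_nonneg (Real.rpow_nonneg ht.1 _), Real.norm_of_nonneg hG.le]
    have hle : x ^ n * t ^ (ν * n) ≤ x ^ n :=
      mul_le_of_le_one_right (pow_nonneg hx n)
        (Real.rpow_le_one ht.1 ht.2 (mul_nonneg hν.le (Nat.cast_nonneg _)))
    exact div_le_div_of_nonneg_right hle hG.le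
  · intro n
    apply ContinuousOn.div_const
    apply ContinuousOn.mul continuousOn_const
    apply Continuous.continuousOn
    rw [continuous_iff_continuousAt]
    exact fun s => Real.continuousAt_rpow_const s _ (Or.inr (mul_nonneg hν.le (Nat.cast_nonneg _)))
end

lemma ml_pos {ν x : ℝ} (hν : 0 < ν) (hν1 : ν ≤ 1) (hx : 0 ≤ x) :
    ∀ t ∈ Set.Icc (0:ℝ) 1,
      0 < ∑' n : ℕ, (-x) ^ n * t ^ (ν * n) / Real.Gamma (ν * n + 1) := by
  set u : ℝ → ℝ := fun t => ∑' n : ℕ, (-x) ^ n * t ^ (ν * n) / Real.Gamma (ν * n + 1) with hu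
  set c : ℝ := x / Real.Gamma ν with hcdef
  have hΓν : 0 < Real.Gamma ν := Real.Gamma_pos_of_pos hν
  have hc : 0 ≤ c := div_nonneg hx hΓν.le
  have hcontu : ContinuousOn u (Set.Icc 0 1) := ml_cont hν hν1 hx
  have hu0 : u 0 = 1 := ml_u0 hν
  have heq : ∀ t ∈ Set.Icc (0:ℝ) 1, u t = 1 - c * ∫ s in (0:ℝ)..t, (t - s) ^ (ν-1) * u s := by
    rintro t ⟨ht0, ht1⟩
    rcases eq_or_lt_of_le ht0 with h | h
    · rw [← h, intervalIntegral.integral_same, mul_zero, sub_zero, hu0]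
    · exact ml_inteq hν hν1 hx h ht1
  have hkerII : ∀ w a b : ℝ, IntervalIntegrable (fun s : ℝ => (w - s) ^ (ν-1)) volume a b := by
    intro w a b
    have := (intervalIntegral.intervalIntegrable_rpow' (a := w - a) (b := w - b)
      (show (-1:ℝ) < ν - 1 by linarith)).comp_sub_left w
    simpa using this
  have huII : ∀ w a b : ℝ, Set.uIcc a b ⊆ Set.Icc (0:ℝ) 1 →
      IntervalIntegrable (fun s : ℝ => (w - s) ^ (ν-1) * u s) volume a b := by
    intro w a b hsub
    exact (hkerII w a b).mul_continuousOn (hcontu.mono hsub)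
  intro t htmem
  by_contra hcon
  push_neg at hcon
  -- the set of zeros
  set Z : Set ℝ := Set.Icc (0:ℝ) 1 ∩ u ⁻¹' Set.Iic 0 with hZ
  have hZc : IsClosed Z := hcontu.preimage_isClosed_of_isClosed isClosed_Icc isClosed_Iic
  have hZne : Z.Nonempty := ⟨t, htmem, hcon⟩
  have hZbdd : BddBelow Z := ⟨0, fun z hz => hz.1.1⟩
  set t0 : ℝ := sInf Z with ht0def
  have ht0Z : t0 ∈ Z := hZc.csInf_mem hZne hZbdd
  have ht0mem : t0 ∈ Set.Icc (0:ℝ) 1 := ht0Z.1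
  have hut0 : u t0 ≤ 0 := ht0Z.2
  have ht0pos : 0 < t0 := by
    rcases eq_or_lt_of_le ht0mem.1 with h | h
    · exfalso; rw [← h] at hut0; rw [hu0] at hut0; linarith
    · exact h
  have hupos : ∀ s : ℝ, 0 ≤ s → s < t0 → 0 < u s := by
    intro s hs0 hst0
    by_contra hus
    push_neg at hus
    have : s ∈ Z := ⟨⟨hs0, le_trans hst0.le ht0mem.2⟩, hus⟩
    exact absurd (csInf_le hZbdd this) (not_le.mpr hst0)
  -- choose δ
  set δ : ℝ := min t0 ((ν / (2*c+2)) ^ (1/ν)) with hδdef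
  have hfrac : 0 < ν / (2*c+2) := by positivity
  have hδpos : 0 < δ := lt_min ht0pos (Real.rpow_pos_of_pos hfrac _)
  have hδt0 : δ ≤ t0 := min_le_left _ _
  have hδbound : c * δ ^ ν / ν ≤ 1/2 := by
    have h1 : δ ^ ν ≤ ν / (2*c+2) := by
      calc δ ^ ν ≤ ((ν / (2*c+2)) ^ (1/ν)) ^ ν :=
            Real.rpow_le_rpow hδpos.le (min_le_right _ _) hν.le
        _ = ν / (2*c+2) := by
            rw [← Real.rpow_mul hfrac.le, one_div, inv_mul_cancel₀ (ne_of_gt hν), Real.rpow_one]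
    rw [div_le_iff₀ hν]
    calc c * δ ^ ν ≤ c * (ν / (2*c+2)) := mul_le_mul_of_nonneg_left h1 hc
      _ ≤ 1/2 * ν := by
          rw [mul_div_assoc']
          rw [div_le_iff₀ (by positivity : (0:ℝ) < 2*c+2)]
          nlinarith
  -- the max on [t0-δ, t0]
  have hsub2 : Set.Icc (t0 - δ) t0 ⊆ Set.Icc (0:ℝ) 1 := by
    intro s hs
    exact ⟨by linarith [hs.1, hδt0], le_trans hs.2 ht0mem.2⟩
  obtain ⟨ts, htsmem, htsmax⟩ := isCompact_Icc.exists_isMaxOn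
    (Set.nonempty_Icc.mpr (by linarith)) (hcontu.mono hsub2)
  set M : ℝ := u ts with hMdef
  have hMbound : ∀ s ∈ Set.Icc (t0 - δ) t0, u s ≤ M := fun s hs => htsmax hs
  have hMpos : 0 < M := by
    have h1 : t0 - δ ∈ Set.Icc (t0 - δ) t0 := ⟨le_refl _, by linarith⟩
    have h2 : 0 < u (t0 - δ) := by
      rcases eq_or_lt_of_le hδt0 with h | h
      · rw [show t0 - δ = 0 by linarith, hu0]; norm_num
      · exact hupos _ (by linarith) (by linarith)
    exact lt_of_lt_of_le h2 (hMbound _ h1)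
  -- the key estimate
  have hkey : ∀ tt : ℝ, t0 - δ ≤ tt → tt < t0 → u tt ≤ c * M * (t0 - tt) ^ ν / ν := by
    intro tt htt1 htt2
    have htt0 : 0 ≤ tt := by linarith [hδt0]
    have htt3 : tt ≤ 1 := le_trans htt2.le ht0mem.2
    have hsub3 : Set.uIcc (0:ℝ) tt ⊆ Set.Icc 0 1 := by
      rw [Set.uIcc_of_le htt0]; exact fun s hs => ⟨hs.1, le_trans hs.2 htt3⟩
    have hsub4 : Set.uIcc tt t0 ⊆ Set.Icc (0:ℝ) 1 := by
      rw [Set.uIcc_of_le htt2.le]; exact fun s hs => ⟨le_trans htt0 hs.1, le_trans hs.2 ht0mem.2⟩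
    have hsub5 : Set.uIcc (0:ℝ) t0 ⊆ Set.Icc (0:ℝ) 1 := by
      rw [Set.uIcc_of_le ht0pos.le]; exact fun s hs => ⟨hs.1, le_trans hs.2 ht0mem.2⟩
    have h1 : 1 ≤ c * ∫ s in (0:ℝ)..t0, (t0 - s) ^ (ν-1) * u s := by
      have := heq t0 ht0mem
      linarith [this ▸ hut0]
    have h2 : u tt = 1 - c * ∫ s in (0:ℝ)..tt, (tt - s) ^ (ν-1) * u s :=
      heq tt ⟨htt0, htt3⟩
    have hsplit : (∫ s in (0:ℝ)..t0, (t0 - s) ^ (ν-1) * u s)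
        = (∫ s in (0:ℝ)..tt, (t0 - s) ^ (ν-1) * u s)
          + ∫ s in tt..t0, (t0 - s) ^ (ν-1) * u s :=
      (intervalIntegral.integral_add_adjacent_intervals
        (huII t0 0 tt hsub3) (huII t0 tt t0 hsub4)).symm
    have hmono1 : (∫ s in (0:ℝ)..tt, (t0 - s) ^ (ν-1) * u s)
        ≤ ∫ s in (0:ℝ)..tt, (tt - s) ^ (ν-1) * u s := by
      apply intervalIntegral.integral_mono_ae_restrict htt0 (huII t0 0 tt hsub3) (huII tt 0 tt hsub3)
      have hne : ∀ᵐ s : ℝ ∂(volume.restrict (Set.Icc 0 tt)), s ≠ tt := by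
        refine MeasureTheory.ae_restrict_of_ae ?_
        rw [MeasureTheory.ae_iff]
        have : {s : ℝ | ¬ s ≠ tt} = {tt} := by ext s; simp
        rw [this]
        exact Real.volume_singleton
      have hmem : ∀ᵐ s : ℝ ∂(volume.restrict (Set.Icc 0 tt)), s ∈ Set.Icc 0 tt :=
        MeasureTheory.ae_restrict_mem measurableSet_Icc
      filter_upwards [hne, hmem] with s hsne hsmem
      have hs0 : 0 ≤ s := hsmem.1
      have hst : s < tt := lt_of_le_of_ne hsmem.2 hsne
      have hker : (t0 - s) ^ (ν-1) ≤ (tt - s) ^ (ν-1) :=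
        Real.rpow_le_rpow_of_nonpos (by linarith) (by linarith) (by linarith)
      exact mul_le_mul_of_nonneg_right hker (hupos s hs0 (lt_trans hst htt2)).le
    have hmono2 : (∫ s in tt..t0, (t0 - s) ^ (ν-1) * u s)
        ≤ M * ((t0 - tt) ^ ν / ν) := by
      have hstep : (∫ s in tt..t0, (t0 - s) ^ (ν-1) * u s)
          ≤ ∫ s in tt..t0, (t0 - s) ^ (ν-1) * M := by
        apply intervalIntegral.integral_mono_on htt2.le (huII t0 tt t0 hsub4)
          ((hkerII t0 tt t0).mul_const M)
        intro s hs
        have hker : (0:ℝ) ≤ (t0 - s) ^ (ν-1) := Real.rpow_nonneg (by linarith [hs.2]) _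
        exact mul_le_mul_of_nonneg_left (hMbound s ⟨le_trans (by linarith) hs.1, hs.2⟩) hker
      have heval : (∫ s in tt..t0, (t0 - s) ^ (ν-1)) = (t0 - tt) ^ ν / ν := by
        rw [intervalIntegral.integral_comp_sub_left (fun r : ℝ => r ^ (ν-1)) t0, sub_self]
        rw [integral_rpow (Or.inl (by linarith : (-1:ℝ) < ν - 1))]
        rw [sub_add_cancel, Real.zero_rpow (ne_of_gt hν), sub_zero]
      calc (∫ s in tt..t0, (t0 - s) ^ (ν-1) * u s)
          ≤ ∫ s in tt..t0, (t0 - s) ^ (ν-1) * M := hstep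
        _ = M * ∫ s in tt..t0, (t0 - s) ^ (ν-1) := by
            rw [← intervalIntegral.integral_const_mul]
            apply intervalIntegral.integral_congr
            intro s _; ring
        _ = M * ((t0 - tt) ^ ν / ν) := by rw [heval]
    have hc1 : c * (∫ s in (0:ℝ)..tt, (t0 - s) ^ (ν-1) * u s)
        ≤ c * ∫ s in (0:ℝ)..tt, (tt - s) ^ (ν-1) * u s := mul_le_mul_of_nonneg_left hmono1 hc
    have hc2 : c * (∫ s in tt..t0, (t0 - s) ^ (ν-1) * u s)
        ≤ c * (M * ((t0 - tt) ^ ν / ν)) := mul_le_mul_of_nonneg_left hmono2 hc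
    have : u tt ≤ c * (M * ((t0 - tt) ^ ν / ν)) := by
      have e : c * (∫ s in (0:ℝ)..t0, (t0 - s) ^ (ν-1) * u s)
          = c * (∫ s in (0:ℝ)..tt, (t0 - s) ^ (ν-1) * u s)
            + c * ∫ s in tt..t0, (t0 - s) ^ (ν-1) * u s := by
        rw [hsplit]; ring
      linarith
    linarith [this, mul_div_assoc (c * M) ((t0-tt)^ν) ν, (by ring :
      c * (M * ((t0 - tt) ^ ν / ν)) = c * M * (t0 - tt) ^ ν / ν)]
  -- contradiction
  have htsne : ts ≠ t0 := by
    intro h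
    rw [h] at hMdef
    rw [hMdef] at hMpos
    linarith
  have hts2 : ts < t0 := lt_of_le_of_ne htsmem.2 htsne
  have hfinal := hkey ts htsmem.1 hts2
  have hpow : (t0 - ts) ^ ν ≤ δ ^ ν :=
    Real.rpow_le_rpow (by linarith) (by linarith [htsmem.1]) hν.le
  have : M ≤ M / 2 := by
    calc M = u ts := rfl
      _ ≤ c * M * (t0 - ts) ^ ν / ν := hfinal
      _ ≤ c * M * δ ^ ν / ν := by
          apply div_le_div_of_nonneg_right _ hν.le
          exact mul_le_mul_of_nonneg_left hpow (by positivity)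
      _ = M * (c * δ ^ ν / ν) := by ring
      _ ≤ M * (1/2) := mul_le_mul_of_nonneg_left hδbound hMpos.le
      _ = M / 2 := by ring
  linarith


theorem mittagLeffler_bounds (ν x : ℝ) (hν : 0 < ν) (hν1 : ν ≤ 1) (hx : 0 ≤ x) :
    0 < mittagLeffler ν 1 (-x) ∧ mittagLeffler ν 1 (-x) ≤ 1 := by
  have hml : mittagLeffler ν 1 (-x)
      = ∑' n : ℕ, (-x) ^ n * (1:ℝ) ^ (ν * n) / Real.Gamma (ν * n + 1) := by
    rw [mittagLeffler]
    apply tsum_congr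
    intro n
    rw [Real.one_rpow, mul_one]
  have h1mem : (1:ℝ) ∈ Set.Icc (0:ℝ) 1 := ⟨zero_le_one, le_refl 1⟩
  have hpos := ml_pos hν hν1 hx
  constructor
  · rw [hml]
    exact hpos 1 h1mem
  · rw [hml]
    have heq := ml_inteq hν hν1 hx one_pos (le_refl (1:ℝ))
    rw [heq]
    have hΓν : 0 < Real.Gamma ν := Real.Gamma_pos_of_pos hν
    have hint : 0 ≤ ∫ s in (0:ℝ)..1,
        (1 - s) ^ (ν-1) * (∑' n : ℕ, (-x) ^ n * s ^ (ν * n) / Real.Gamma (ν * n + 1)) := by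
      apply intervalIntegral.integral_nonneg zero_le_one
      intro s hs
      have h1 : (0:ℝ) ≤ (1 - s) ^ (ν-1) := Real.rpow_nonneg (by linarith [hs.2]) _
      exact mul_nonneg h1 (hpos s hs).le
    have hc : 0 ≤ x / Real.Gamma ν := div_nonneg hx hΓν.le
    nlinarith [mul_nonneg hc hint]
end
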